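/- Let ζ, θ, u, v : ℝ → ℝ be differentiable with, for all t: sin(ζ t) ≠ 0, sin(θ t) ≠ 0, u′(t) = cos(ζ t)/sin(ζ t), v′(t) = cos(θ t)/(sin(ζ t)·sin(θ t)). Define F : ℝ² → ℝ³ by F(t,s) = (t − s·sin(θ t)·sin(ζ t), u t − s·sin(θ t)·cos(ζ t), v t − s·cos(θ t)). Then at every (t,s), the squared Euclidean norm of the partial derivative in the t-direction satisfies ‖∂F/∂t‖² = 1/(sin(ζ t)²·sin(θ t)²) + s²·(ζ′(t)²·sin(θ t)² + θ′(t)²). -/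

import Mathlib

/-!
Write `F (t, s) = c t - s • T t` with `c t = (t, u t, v t)` and `T` the unit vector with polar
angle `θ` and azimuth `ζ`. The hypotheses on `u'` and `v'` say exactly that
`c' = (sin ζ sin θ)⁻¹ • T`, and `T' ⊥ T` because `‖T‖ = 1`, so by Pythagoras
`‖∂F/∂t‖² = (sin ζ sin θ)⁻² + s² ‖T'‖²`, where `‖T'‖² = ζ'² sin² θ + θ'²` is the spherical
line element.
-/

open Real

/-- Euler's parametrization of a developable (tangent) surface. -/
noncomputable def eulerF (ζ θ u v : ℝ → ℝ) (w : ℝ × ℝ) : EuclideanSpace ℝ (Fin 3) :=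
  WithLp.toLp 2 ![w.1 - w.2 * sin (θ w.1) * sin (ζ w.1),
    u w.1 - w.2 * sin (θ w.1) * cos (ζ w.1),
    v w.1 - w.2 * cos (θ w.1)]

theorem hasDerivAt_euclidean {ι : Type*} [Fintype ι] {f : ℝ → EuclideanSpace ℝ ι}
    {f' : EuclideanSpace ℝ ι} {x : ℝ} :
    HasDerivAt f f' x ↔ ∀ i, HasDerivAt (fun y => f y i) (f' i) x := by
  let e := PiLp.continuousLinearEquiv 2 ℝ (fun _ : ι => ℝ)
  rw [← hasDerivAt_pi]
  exact ⟨fun h => e.hasFDerivAt.comp_hasDerivAt x h,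
    fun h => e.symm.hasFDerivAt.comp_hasDerivAt x h⟩

theorem inner_deriv_eq_zero_of_norm_eq {E : Type*} [NormedAddCommGroup E] [InnerProductSpace ℝ E]
    {f : ℝ → E} {x r : ℝ} (hf : DifferentiableAt ℝ f x) (hr : ∀ y, ‖f y‖ = r) :
    inner ℝ (f x) (deriv f x) = 0 := by
  have h := hf.hasDerivAt.norm_sq
  simp only [hr] at h
  linarith [h.unique (hasDerivAt_const x (r ^ 2))]

theorem norm_smul_sub_smul_sq_of_inner_eq_zero {E : Type*} [NormedAddCommGroup E]
    [InnerProductSpace ℝ E] {x y : E} (h : inner ℝ x y = 0) (a b : ℝ) :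
    ‖a • x - b • y‖ ^ 2 = a ^ 2 * ‖x‖ ^ 2 + b ^ 2 * ‖y‖ ^ 2 := by
  rw [norm_sub_sq_real, real_inner_smul_left, real_inner_smul_right, h, norm_smul, norm_smul,
    Real.norm_eq_abs, Real.norm_eq_abs, mul_pow, mul_pow, sq_abs, sq_abs]
  ring

theorem hasDerivAt_euclideanSpace_three {f g h : ℝ → ℝ} {f' g' h' x : ℝ}
    (hf : HasDerivAt f f' x) (hg : HasDerivAt g g' x) (hh : HasDerivAt h h' x) :
    HasDerivAt (fun y => !₂[f y, g y, h y]) !₂[f', g', h'] x :=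
  hasDerivAt_euclidean.2 fun i => by fin_cases i <;> assumption

noncomputable def eulerCurve (u v : ℝ → ℝ) (t : ℝ) : EuclideanSpace ℝ (Fin 3) :=
  !₂[t, u t, v t]

noncomputable def eulerDirection (ζ θ : ℝ → ℝ) (t : ℝ) : EuclideanSpace ℝ (Fin 3) :=
  !₂[sin (θ t) * sin (ζ t), sin (θ t) * cos (ζ t), cos (θ t)]

theorem eulerF_eq (ζ θ u v : ℝ → ℝ) (t s : ℝ) :
    eulerF ζ θ u v (t, s) = eulerCurve u v t - s • eulerDirection ζ θ t := by
  ext i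
  fin_cases i <;> simp [eulerF, eulerCurve, eulerDirection, mul_assoc]

theorem norm_eulerDirection (ζ θ : ℝ → ℝ) (t : ℝ) : ‖eulerDirection ζ θ t‖ = 1 := by
  rw [← pow_eq_one_iff_of_nonneg (norm_nonneg _) two_ne_zero]
  simp only [eulerDirection, EuclideanSpace.norm_sq_eq, Fin.sum_univ_three, Real.norm_eq_abs, sq_abs, Fin.isValue, Matrix.cons_val_zero, Matrix.cons_val_one,
    Matrix.cons_val]
  linear_combination (sin (θ t) ^ 2) * sin_sq_add_cos_sq (ζ t) + sin_sq_add_cos_sq (θ t)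

theorem hasDerivAt_eulerDirection {ζ θ : ℝ → ℝ} {ζ' θ' t : ℝ} (hζ : HasDerivAt ζ ζ' t)
    (hθ : HasDerivAt θ θ' t) :
    HasDerivAt (eulerDirection ζ θ)
      !₂[θ' * cos (θ t) * sin (ζ t) + ζ' * sin (θ t) * cos (ζ t),
        θ' * cos (θ t) * cos (ζ t) - ζ' * sin (θ t) * sin (ζ t), -θ' * sin (θ t)] t :=
  hasDerivAt_euclideanSpace_three ((hθ.sin.mul hζ.sin).congr_deriv (by ring))
    ((hθ.sin.mul hζ.cos).congr_deriv (by ring)) (hθ.cos.congr_deriv (by ring))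

theorem norm_sq_deriv_eulerDirection {ζ θ : ℝ → ℝ} {t : ℝ} (hζ : DifferentiableAt ℝ ζ t)
    (hθ : DifferentiableAt ℝ θ t) :
    ‖deriv (eulerDirection ζ θ) t‖ ^ 2 =
      deriv ζ t ^ 2 * sin (θ t) ^ 2 + deriv θ t ^ 2 := by
  rw [(hasDerivAt_eulerDirection hζ.hasDerivAt hθ.hasDerivAt).deriv, EuclideanSpace.norm_sq_eq,
    Fin.sum_univ_three]
  simp only [Real.norm_eq_abs, sq_abs, Fin.isValue, Matrix.cons_val_zero, Matrix.cons_val_one,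
    Matrix.cons_val]
  linear_combination (deriv ζ t ^ 2 * sin (θ t) ^ 2 + deriv θ t ^ 2 * cos (θ t) ^ 2) *
      sin_sq_add_cos_sq (ζ t) + deriv θ t ^ 2 * sin_sq_add_cos_sq (θ t)

theorem hasDerivAt_eulerCurve {u v : ℝ → ℝ} {u' v' t : ℝ} (hu : HasDerivAt u u' t)
    (hv : HasDerivAt v v' t) : HasDerivAt (eulerCurve u v) !₂[1, u', v'] t :=
  hasDerivAt_euclideanSpace_three (hasDerivAt_id' t) hu hv

theorem eulerCurve_tangent_eq_smul_eulerDirection {ζ θ : ℝ → ℝ} {t : ℝ} (hsinζ : sin (ζ t) ≠ 0)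
    (hsinθ : sin (θ t) ≠ 0) :
    !₂[1, cos (ζ t) / sin (ζ t), cos (θ t) / (sin (ζ t) * sin (θ t))] =
      (sin (ζ t) * sin (θ t))⁻¹ • eulerDirection ζ θ t := by
  ext i
  fin_cases i <;> simp [eulerDirection] <;> field_simp

theorem euler_squared_norm_of_t_partial
    (ζ θ u v : ℝ → ℝ)
    (hζ : Differentiable ℝ ζ) (hθ : Differentiable ℝ θ)
    (hu : Differentiable ℝ u) (hv : Differentiable ℝ v)
    (hsinζ : ∀ t, sin (ζ t) ≠ 0) (hsinθ : ∀ t, sin (θ t) ≠ 0)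
    (hu' : ∀ t, deriv u t = cos (ζ t) / sin (ζ t))
    (hv' : ∀ t, deriv v t = cos (θ t) / (sin (ζ t) * sin (θ t))) :
    ∀ t s : ℝ,
      ‖deriv (fun t' => eulerF ζ θ u v (t', s)) t‖ ^ 2 =
        1 / ((sin (ζ t)) ^ 2 * (sin (θ t)) ^ 2) +
          s ^ 2 * ((deriv ζ t) ^ 2 * (sin (θ t)) ^ 2 + (deriv θ t) ^ 2) := by
  intro t s
  have hDir : DifferentiableAt ℝ (eulerDirection ζ θ) t :=
    (hasDerivAt_eulerDirection (hζ t).hasDerivAt (hθ t).hasDerivAt).differentiableAt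
  have hCurve := hasDerivAt_eulerCurve (hu t).hasDerivAt (hv t).hasDerivAt
  rw [hu', hv', eulerCurve_tangent_eq_smul_eulerDirection (hsinζ t) (hsinθ t)] at hCurve
  have hF : HasDerivAt (fun t' => eulerF ζ θ u v (t', s))
      ((sin (ζ t) * sin (θ t))⁻¹ • eulerDirection ζ θ t - s • deriv (eulerDirection ζ θ) t) t := by
    simp only [eulerF_eq]
    exact hCurve.sub (hDir.hasDerivAt.const_smul s)
  rw [hF.deriv, norm_smul_sub_smul_sq_of_inner_eq_zero
      (inner_deriv_eq_zero_of_norm_eq hDir (norm_eulerDirection ζ θ)),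
    norm_eulerDirection, norm_sq_deriv_eulerDirection (hζ t) (hθ t)]
  field_simp
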